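/- arXiv:1905.02382 — 3 statements merged into one kernel-verified Lean document; each statement's English description precedes it below -/
import Mathlib

section
/- Let A be a finite abelian group and let G = ℤ ⋉ A be a semidirect product where 1 ∈ ℤ acts by an automorphism σ of A. Then the restriction to A of any finite-dimensional complex irreducible representation of G decomposes as a direct sum of pairwise distinct one-dimensional representations (characters) of A. -/
open SemidirectProduct

/-- A representation is irreducible: nontrivial and no proper nonzero invariant subspace. -/
def IsIrrep {k G V : Type*} [CommRing k] [Group G] [AddCommGroup V] [Module k V]
    (ρ : Representation k G V) : Prop :=
  Nontrivial V ∧ ∀ W : Submodule k V, (∀ g, ∀ v ∈ W, ρ g v ∈ W) → W = ⊥ ∨ W = ⊤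

/-- The simultaneous eigenspace `V_χ` for a character `χ` of an abelian group. -/
def charSpace {A V : Type*} [CommGroup A] [AddCommGroup V] [Module ℂ V]
    (ρ : Representation ℂ A V) (χ : A →* ℂˣ) : Submodule ℂ V where
  carrier := {v | ∀ a, ρ a v = (χ a : ℂ) • v}
  add_mem' := by intro x y hx hy a; simp [hx a, hy a, smul_add]
  zero_mem' := by intro a; simp
  smul_mem' := by intro c x hx a; simp [hx a, smul_comm c]

/-!
Since every `ρ a` has finite order and the `ρ a` commute, `V` is the direct sum of the character
spaces `V_χ`. The generator `t = inr (ofAdd 1)` carries `V_χ` to `V_{χ ∘ σ⁻¹}`. If `m` is the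
length of the orbit of `χ` under this twist, `t ^ m` preserves `V_χ`; for an eigenvector `v ∈ V_χ`
of `t ^ m`, the span of the `t ^ k v` is `G`-invariant, hence all of `V`, and the only vectors
`t ^ k v` lying in `V_χ` are the multiples `t ^ (j * m) v = μ ^ j • v` of `v`. Independence of the
`V_χ` then forces `V_χ = ℂ v`.
-/

open Module Module.End Polynomial Function Set Multiplicative Submodule

lemma Module.End.isSemisimple_of_pow_eq_one {K V : Type*} [Field K] [AddCommGroup V] [Module K V]
    {f : End K V} {n : ℕ} (hn : (n : K) ≠ 0) (hf : f ^ n = 1) : f.IsSemisimple :=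
  isSemisimple_of_squarefree_aeval_eq_zero (X_pow_sub_one_separable_iff.mpr hn).squarefree
    (by rw [map_sub, map_one, aeval_X_pow, hf, sub_self])

lemma Representation.exists_monoidHom_units_of_apply_eq_smul {K G V : Type*} [Field K] [Group G]
    [AddCommGroup V] [Module K V] (ρ : Representation K G V) {ξ : G → K} {v : V} (hv : v ≠ 0)
    (hξ : ∀ g, ρ g v = ξ g • v) : ∃ χ : G →* Kˣ, ∀ g, (χ g : K) = ξ g := by
  have hone : ξ 1 = 1 := smul_left_injective K hv <| by
    dsimp only
    rw [← hξ, map_one, one_smul, Module.End.one_apply]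
  have hmul : ∀ g h, ξ (g * h) = ξ g * ξ h := fun g h => smul_left_injective K hv <| by
    dsimp only
    rw [← hξ, map_mul, Module.End.mul_apply, hξ, map_smul, hξ, smul_smul, mul_comm]
  exact ⟨MonoidHom.toHomUnits ⟨⟨ξ, hone⟩, hmul⟩, fun _ => rfl⟩

lemma Representation.commute_apply {K A V : Type*} [CommSemiring K] [CommMonoid A]
    [AddCommMonoid V] [Module K V] (ρ : Representation K A V) (a b : A) :
    Commute (ρ a) (ρ b) := by
  rw [Commute, SemiconjBy, ← map_mul, ← map_mul, mul_comm]

section CommGroup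

variable {A V : Type*} [CommGroup A] [AddCommGroup V] [Module ℂ V]

lemma charSpace_eq_iInf_eigenspace (ρ : Representation ℂ A V) (χ : A →* ℂˣ) :
    charSpace ρ χ = ⨅ a, eigenspace (ρ a) (χ a : ℂ) := by
  ext v
  simp [charSpace]

lemma iSupIndep_charSpace (ρ : Representation ℂ A V) : iSupIndep (charSpace ρ) := by
  have hinj : Injective fun (χ : A →* ℂˣ) (a : A) => (χ a : ℂ) :=
    fun _ _ h => MonoidHom.ext fun a => Units.ext (congrFun h a)
  refine ((independent_iInf_maxGenEigenspace_of_forall_mapsTo (fun a => ρ a)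
    fun a b μ => mapsTo_maxGenEigenspace_of_comm (ρ.commute_apply b a) μ).comp hinj).mono fun χ => ?_
  rw [charSpace_eq_iInf_eigenspace]
  exact iInf_mono fun a => eigenspace_le_maxGenEigenspace

lemma iSup_charSpace_eq_top [Finite A] [FiniteDimensional ℂ V] (ρ : Representation ℂ A V) :
    ⨆ χ, charSpace ρ χ = ⊤ := by
  have hss (a : A) : IsSemisimple (ρ a) := isSemisimple_of_pow_eq_one (n := Nat.card A)
    (Nat.cast_ne_zero.mpr Nat.card_pos.ne') (by rw [← map_pow, pow_card_eq_one', map_one])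
  have htop : ⨆ ξ : A → ℂ, ⨅ a, eigenspace (ρ a) (ξ a) = ⊤ := by
    simpa only [fun a => (hss a).isFinitelySemisimple.maxGenEigenspace_eq_eigenspace] using
      iSup_iInf_maxGenEigenspace_eq_top_of_iSup_maxGenEigenspace_eq_top_of_commute (fun a => ρ a)
        (fun a b _ => ρ.commute_apply a b) fun a => iSup_maxGenEigenspace_eq_top (ρ a)
  refine eq_top_iff.mpr (htop ▸ iSup_le fun ξ => ?_)
  rcases eq_or_ne (⨅ a, eigenspace (ρ a) (ξ a)) ⊥ with h | h
  · exact h ▸ bot_le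
  obtain ⟨v, hv, hv0⟩ := (Submodule.ne_bot_iff _).mp h
  have hξ (a : A) : ρ a v = ξ a • v := mem_eigenspace_iff.mp ((Submodule.mem_iInf _).mp hv a)
  obtain ⟨χ, hχ⟩ := ρ.exists_monoidHom_units_of_apply_eq_smul hv0 hξ
  rw [show ξ = fun a => (χ a : ℂ) from funext fun a => (hχ a).symm, ← charSpace_eq_iInf_eigenspace]
  exact le_iSup (charSpace ρ) χ

end CommGroup

lemma Module.End.exists_hasEigenvector_mem_of_mapsTo {K V : Type*} [Field K] [IsAlgClosed K]
    [AddCommGroup V] [Module K V] [FiniteDimensional K V] (f : End K V) {U : Submodule K V}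
    (hU : U ≠ ⊥) (hf : MapsTo f U U) : ∃ μ, ∃ v ∈ U, f.HasEigenvector μ v := by
  have := Submodule.nontrivial_iff_ne_bot.mpr hU
  obtain ⟨μ, hμ⟩ := exists_eigenvalue (f.restrict hf)
  obtain ⟨⟨v, hvU⟩, hv, hv0⟩ := hμ.exists_hasEigenvector
  refine ⟨μ, v, hvU, mem_eigenspace_iff.mpr ?_, fun h => hv0 (Subtype.ext h)⟩
  exact congrArg Subtype.val (mem_eigenspace_iff.mp hv)

lemma Representation.mapsTo_of_mapsTo_ofAdd_one {K V : Type*} [Field K] [AddCommGroup V]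
    [Module K V] [FiniteDimensional K V] (ψ : Representation K (Multiplicative ℤ) V)
    {W : Submodule K V} (hW : MapsTo (ψ (ofAdd 1)) W W) (z : Multiplicative ℤ) :
    MapsTo (ψ z) W W := by
  have hinj : Injective ((ψ (ofAdd 1)).restrict hW) :=
    fun x y h => Subtype.ext ((ψ.apply_bijective _).1 (congrArg Subtype.val h))
  have hback : MapsTo (ψ (ofAdd (-1))) W W := by
    intro w hw
    obtain ⟨⟨u, hu⟩, hu'⟩ := LinearMap.injective_iff_surjective.mp hinj ⟨w, hw⟩
    rwa [ofAdd_neg, ψ.inv_apply_eq_iff.mpr (congrArg Subtype.val hu').symm]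
  induction z using Multiplicative.rec with | _ n => ?_
  induction n using Int.induction_on with
  | zero => rw [ofAdd_zero, map_one, Module.End.coe_one]; exact mapsTo_id _
  | succ n ih => rw [ofAdd_add, map_mul, Module.End.coe_mul]; exact ih.comp hW
  | pred n ih => rw [sub_eq_add_neg, ofAdd_add, map_mul, Module.End.coe_mul]; exact ih.comp hback

section SemidirectProduct

variable {V : Type*} [AddCommGroup V]

lemma mapsTo_of_mapsTo_inl_of_mapsTo_inr_one {K N : Type*} [Field K] [Module K V]
    [FiniteDimensional K V] [Group N] {φ : Multiplicative ℤ →* MulAut N}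
    (ρ : Representation K (N ⋊[φ] Multiplicative ℤ) V) {W : Submodule K V}
    (hinl : ∀ n, MapsTo (ρ (inl n)) W W) (hinr : MapsTo (ρ (inr (ofAdd 1))) W W)
    (g : N ⋊[φ] Multiplicative ℤ) : MapsTo (ρ g) W W := by
  rw [← inl_left_mul_inr_right g, map_mul, Module.End.coe_mul]
  exact (hinl _).comp (Representation.mapsTo_of_mapsTo_ofAdd_one (ρ.comp inr) hinr _)

variable [Module ℂ V]

-- `(φ h).monoidHomCongrLeftEquiv χ` is `χ ∘ (φ h)⁻¹`.
lemma mapsTo_charSpace_inr {N H : Type*} [CommGroup N] [Group H] {φ : H →* MulAut N}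
    (ρ : Representation ℂ (N ⋊[φ] H) V) (h : H) (χ : N →* ℂˣ) :
    MapsTo (ρ (inr h)) (charSpace (ρ.comp inl) χ)
      (charSpace (ρ.comp inl) ((φ h).monoidHomCongrLeftEquiv χ)) := by
  intro v hv n
  have hcomm : (inl n : N ⋊[φ] H) * inr h = inr h * inl ((φ h)⁻¹ n) := by
    rw [inl_aut_inv, ← mul_assoc, ← mul_assoc, ← map_mul, mul_inv_cancel, map_one, one_mul]
  change ρ (inl n) (ρ (inr h) v) = _
  rw [← Module.End.mul_apply, ← map_mul, hcomm, map_mul, Module.End.mul_apply]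
  exact (congrArg (ρ (inr h)) (hv _)).trans (map_smul _ _ _)

variable {A : Type*} [CommGroup A]

lemma mapsTo_charSpace_pow (σ : MulAut A)
    (ρ : Representation ℂ (A ⋊[zpowersHom (MulAut A) σ] Multiplicative ℤ) V) (k : ℕ)
    (χ : A →* ℂˣ) :
    MapsTo (ρ (inr (ofAdd 1)) ^ k) (charSpace (ρ.comp inl) χ)
      (charSpace (ρ.comp inl) (σ.monoidHomCongrLeftEquiv^[k] χ)) := by
  induction k generalizing χ with
  | zero => exact mapsTo_id _
  | succ k ih =>
    rw [pow_succ, Module.End.coe_mul, iterate_succ_apply]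
    exact (ih _).comp (by simpa using mapsTo_charSpace_inr ρ (ofAdd 1) χ)

end SemidirectProduct

section Multiplicity

variable {A V : Type*} [CommGroup A] [AddCommGroup V] [Module ℂ V] (σ : MulAut A)
  (ρ : Representation ℂ (A ⋊[zpowersHom (MulAut A) σ] Multiplicative ℤ) V)

lemma mapsTo_span_orbit [FiniteDimensional ℂ V] {χ : A →* ℂˣ} {v : V}
    (hv : v ∈ charSpace (ρ.comp inl) χ) (g : A ⋊[zpowersHom (MulAut A) σ] Multiplicative ℤ) :
    MapsTo (ρ g) (span ℂ (range fun k : ℕ => (ρ (inr (ofAdd 1)) ^ k) v))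
      (span ℂ (range fun k : ℕ => (ρ (inr (ofAdd 1)) ^ k) v)) := by
  refine mapsTo_of_mapsTo_inl_of_mapsTo_inr_one ρ (fun a x hx => ?_)
    (mapsTo_span ?_) g
  · refine (span_le (p := (span ℂ _).comap (ρ (inl a)))).2 ?_ hx
    rintro _ ⟨k, rfl⟩
    have heigen := mapsTo_charSpace_pow σ ρ k χ hv a
    rw [MonoidHom.comp_apply] at heigen
    rw [SetLike.mem_coe, mem_comap, heigen]
    exact smul_mem _ _ (subset_span ⟨k, rfl⟩)
  · rintro _ ⟨k, rfl⟩
    exact ⟨k + 1, by dsimp only; rw [pow_succ', Module.End.mul_apply]⟩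

lemma span_orbit_le_sup {χ : A →* ℂˣ} {v : V} {μ : ℂ} (hv : v ∈ charSpace (ρ.comp inl) χ)
    (hμ : HasEigenvector (ρ (inr (ofAdd 1)) ^ minimalPeriod σ.monoidHomCongrLeftEquiv χ) μ v) :
    span ℂ (range fun k : ℕ => (ρ (inr (ofAdd 1)) ^ k) v) ≤
      span ℂ {v} ⊔ ⨆ (χ' : A →* ℂˣ) (_ : χ' ≠ χ), charSpace (ρ.comp inl) χ' := by
  rw [span_le]
  rintro _ ⟨k, rfl⟩
  by_cases hk : IsPeriodicPt σ.monoidHomCongrLeftEquiv k χ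
  · obtain ⟨j, rfl⟩ := hk.minimalPeriod_dvd
    dsimp only
    rw [pow_mul, hμ.pow_apply]
    exact mem_sup_left (smul_mem _ _ (mem_span_singleton_self v))
  · exact mem_sup_right (mem_iSup_of_mem _ (mem_iSup_of_mem hk (mapsTo_charSpace_pow σ ρ k χ hv)))

theorem finrank_charSpace_le_one [FiniteDimensional ℂ V] (hirr : IsIrrep ρ) (χ : A →* ℂˣ) :
    finrank ℂ (charSpace (ρ.comp inl) χ) ≤ 1 := by
  rcases eq_or_ne (charSpace (ρ.comp inl) χ) ⊥ with h | h
  · rw [h, finrank_bot]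
    exact zero_le_one
  have hT : MapsTo (ρ (inr (ofAdd 1)) ^ minimalPeriod σ.monoidHomCongrLeftEquiv χ)
      (charSpace (ρ.comp inl) χ) (charSpace (ρ.comp inl) χ) := by
    have := mapsTo_charSpace_pow σ ρ (minimalPeriod σ.monoidHomCongrLeftEquiv χ) χ
    rwa [iterate_minimalPeriod] at this
  obtain ⟨μ, v, hv, hμ⟩ := exists_hasEigenvector_mem_of_mapsTo _ h hT
  have hvW : v ∈ span ℂ (range fun k : ℕ => (ρ (inr (ofAdd 1)) ^ k) v) :=
    subset_span ⟨0, rfl⟩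
  have hspan : span ℂ (range fun k : ℕ => (ρ (inr (ofAdd 1)) ^ k) v) = ⊤ := by
    refine (hirr.2 _ fun g x hx => mapsTo_span_orbit σ ρ hv g hx).resolve_left fun hbot => ?_
    exact hμ.2 ((mem_bot ℂ).mp (hbot ▸ hvW))
  have heq := eq_of_le_of_inf_le_of_le_sup ((span_singleton_le_iff_mem v _).mpr hv)
    ((iSupIndep_charSpace _ χ).eq_bot.le.trans bot_le)
    (hspan ▸ le_top |>.trans (span_orbit_le_sup σ ρ hv hμ))
  rw [← heq, finrank_span_singleton hμ.2]

end Multiplicity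

/-- The restriction to `A` of any finite-dimensional complex irreducible representation of
`G = ℤ ⋉ A` (with `1 ∈ ℤ` acting by `σ`) is a direct sum of pairwise distinct characters:
the eigenspaces are independent, they span `V`, and each has dimension at most one. -/
theorem stmt0 {A V : Type} [CommGroup A] [Fintype A] [AddCommGroup V] [Module ℂ V]
    [FiniteDimensional ℂ V] (σ : MulAut A)
    (ρ : Representation ℂ (A ⋊[zpowersHom (MulAut A) σ] Multiplicative ℤ) V)
    (hirr : IsIrrep ρ) :
    iSupIndep (fun χ : A →* ℂˣ => charSpace (ρ.comp inl) χ) ∧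
    (⨆ χ : A →* ℂˣ, charSpace (ρ.comp inl) χ) = ⊤ ∧
    ∀ χ : A →* ℂˣ, Module.finrank ℂ (charSpace (ρ.comp inl) χ) ≤ 1 :=
  ⟨iSupIndep_charSpace _, iSup_charSpace_eq_top _, finrank_charSpace_le_one σ ρ hirr⟩
end

section
/- Let A be a finite abelian group, σ an automorphism of A, and V a finite-dimensional complex irreducible representation of G = ℤ ⋉ A. For each character χ of A occurring in the restriction of V to A, the χ-eigenspace V_χ = {v ∈ V | a·v = χ(a)v for all a ∈ A} is one-dimensional. -/
/-!
The stabilizer `S ≤ ℤ` of `χ` is cyclic and preserves `V_χ`, so `V_χ` contains an eigenvector `v`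
of a generator of `S`, hence of all of `S`. By irreducibility the translates `ρ (inr n) v` span
`V`, and each of them lies in the character space of `χ ∘ σ⁻ⁿ`. Applying the averaging projector
onto `V_χ` shows that `V_χ` is spanned by the translates with `n ∈ S`, all multiples of `v`.
-/

open SemidirectProduct

namespace Representation

variable {k G V : Type*} [CommRing k] [Group G] [AddCommGroup V] [Module k V]

def lineStabilizer (π : Representation k G V) (v : V) : Subgroup G where
  carrier := {g | ∃ c : kˣ, π g v = (c : k) • v}
  one_mem' := ⟨1, by simp⟩
  mul_mem' := by
    rintro g h ⟨c, hc⟩ ⟨d, hd⟩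
    exact ⟨d * c, by rw [map_mul, Module.End.mul_apply, hd, map_smul, hc, smul_smul,
      Units.val_mul]⟩
  inv_mem' := by
    rintro g ⟨c, hc⟩
    exact ⟨c⁻¹, π.inv_apply_eq_iff.2 (by rw [map_smul, hc, smul_smul, Units.inv_mul, one_smul])⟩

end Representation

section CharProj

variable {A V : Type*} [CommGroup A] [AddCommGroup V] [Module ℂ V] (ρ : Representation ℂ A V)

lemma eq_of_mem_charSpace {χ ψ : A →* ℂˣ} {v : V} (hχ : v ∈ charSpace ρ χ)
    (hψ : v ∈ charSpace ρ ψ) (hv : v ≠ 0) : χ = ψ := by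
  ext a
  exact smul_left_injective ℂ hv ((hχ a).symm.trans (hψ a))

variable [Fintype A]

noncomputable def charProj (χ : A →* ℂˣ) : V →ₗ[ℂ] V :=
  (Fintype.card A : ℂ)⁻¹ • ∑ a, ((χ a : ℂ)⁻¹ • ρ a)

lemma charProj_apply_of_mem {χ ψ : A →* ℂˣ} {v : V} (hv : v ∈ charSpace ρ ψ) :
    charProj ρ χ v = (Fintype.card A : ℂ)⁻¹ • (∑ a, ((χ⁻¹ * ψ) a : ℂ)) • v := by
  simp [charProj, Finset.sum_smul, hv _, smul_smul]

lemma charProj_apply_of_mem_self {χ : A →* ℂˣ} {v : V} (hv : v ∈ charSpace ρ χ) :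
    charProj ρ χ v = v := by
  have hcard : (Fintype.card A : ℂ) ≠ 0 := Nat.cast_ne_zero.2 Fintype.card_ne_zero
  simp [charProj_apply_of_mem ρ hv, smul_smul, hcard]

lemma charProj_apply_of_mem_of_ne {χ ψ : A →* ℂˣ} {v : V} (hv : v ∈ charSpace ρ ψ)
    (hne : ψ ≠ χ) : charProj ρ χ v = 0 := by
  have hsum : ∑ a, ((Units.coeHom ℂ).comp (χ⁻¹ * ψ)) a = 0 := by
    refine sum_hom_units_eq_zero _ fun h => hne ?_
    rw [← MonoidHom.comp_one (Units.coeHom ℂ)] at h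
    exact (inv_mul_eq_one.1 ((MonoidHom.cancel_left Units.val_injective).1 h)).symm
  simp only [MonoidHom.comp_apply, Units.coeHom_apply] at hsum
  rw [charProj_apply_of_mem ρ hv, hsum, zero_smul, smul_zero]

lemma charSpace_le_span_inter {s : Set V} (hs : Submodule.span ℂ s = ⊤)
    (hchar : ∀ x ∈ s, ∃ ψ, x ∈ charSpace ρ ψ) (χ : A →* ℂˣ) :
    charSpace ρ χ ≤ Submodule.span ℂ (s ∩ charSpace ρ χ) := by
  have hmap :
      (Submodule.span ℂ s).map (charProj ρ χ) ≤ Submodule.span ℂ (s ∩ charSpace ρ χ) := by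
    rw [Submodule.map_span, Submodule.span_le]
    rintro _ ⟨x, hx, rfl⟩
    obtain ⟨ψ, hψ⟩ := hchar x hx
    by_cases hψχ : ψ = χ
    · subst hψχ
      rw [charProj_apply_of_mem_self ρ hψ]
      exact Submodule.subset_span ⟨hx, hψ⟩
    · rw [charProj_apply_of_mem_of_ne ρ hψ hψχ]
      exact Submodule.zero_mem _
  intro v hv
  rw [← charProj_apply_of_mem_self ρ hv]
  exact hmap (Submodule.mem_map_of_mem (hs ▸ Submodule.mem_top))

end CharProj

section SemidirectProduct

variable {N H V : Type*} [CommGroup N] [Group H] {φ : H →* MulAut N}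
  [AddCommGroup V] [Module ℂ V] (ρ : Representation ℂ (N ⋊[φ] H) V)

lemma SemidirectProduct.inl_mul_inr_eq_inr_mul_inl (n : N) (h : H) :
    (inl n * inr h : N ⋊[φ] H) = inr h * inl (φ h⁻¹ n) := by
  ext <;> simp

variable (φ) in
def charStabilizer (χ : N →* ℂˣ) : Subgroup H where
  carrier := {h | ∀ n, χ (φ h n) = χ n}
  one_mem' n := by simp
  mul_mem' {g h} hg hh n := by rw [map_mul, MulAut.mul_apply, hg, hh]
  inv_mem' {h} hh n := by rw [← hh, ← MulAut.mul_apply, ← map_mul, mul_inv_cancel, map_one,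
    MulAut.one_apply]

lemma apply_inr_mem_charSpace {χ : N →* ℂˣ} {v : V} (hv : v ∈ charSpace (ρ.comp inl) χ)
    (h : H) : ρ (inr h) v ∈ charSpace (ρ.comp inl) (χ.comp (φ h⁻¹).toMonoidHom) := by
  intro n
  have hvn : ρ (inl (φ h⁻¹ n)) v = (χ (φ h⁻¹ n) : ℂ) • v := hv _
  calc ρ (inl n) (ρ (inr h) v) = ρ (inl n * inr h) v := by rw [map_mul]; rfl
    _ = ρ (inr h) (ρ (inl (φ h⁻¹ n)) v) := by rw [inl_mul_inr_eq_inr_mul_inl, map_mul]; rfl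
    _ = (χ (φ h⁻¹ n) : ℂ) • ρ (inr h) v := by rw [hvn, map_smul]

lemma comp_eq_of_mem_charStabilizer {χ : N →* ℂˣ} {h : H} (hh : h ∈ charStabilizer φ χ) :
    χ.comp (φ h).toMonoidHom = χ :=
  MonoidHom.ext hh

lemma mem_charStabilizer_of_apply_inr_mem {χ : N →* ℂˣ} {v : V}
    (hv : v ∈ charSpace (ρ.comp inl) χ) {h : H} (hχh : ρ (inr h) v ∈ charSpace (ρ.comp inl) χ)
    (h0 : ρ (inr h) v ≠ 0) : h ∈ charStabilizer φ χ := by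
  have hχ := eq_of_mem_charSpace _ (apply_inr_mem_charSpace ρ hv h) hχh h0
  exact inv_mem_iff.1 fun n => DFunLike.congr_fun hχ n

lemma span_range_apply_inr_eq_top (hirr : IsIrrep ρ) {χ : N →* ℂˣ} {v : V}
    (hv : v ∈ charSpace (ρ.comp inl) χ) (hv0 : v ≠ 0) :
    Submodule.span ℂ (Set.range fun h => ρ (inr h) v) = ⊤ := by
  set W := Submodule.span ℂ (Set.range fun h => ρ (inr h) v)
  have hvW : v ∈ W := Submodule.subset_span ⟨1, by simp⟩
  have hinv : ∀ g, ∀ w ∈ W, ρ g w ∈ W := by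
    intro g w hw
    suffices hmap : W.map (ρ g) ≤ W from hmap (Submodule.mem_map_of_mem hw)
    rw [Submodule.map_span, Submodule.span_le]
    rintro _ ⟨_, ⟨h, rfl⟩, rfl⟩
    have hg : ρ g (ρ (inr h) v) = ρ (inl g.left) (ρ (inr (g.right * h)) v) := by
      conv_lhs => rw [← inl_left_mul_inr_right g]
      simp only [map_mul, Module.End.mul_apply]
    have hχ' : ρ (inl g.left) (ρ (inr (g.right * h)) v) = _ :=
      apply_inr_mem_charSpace ρ hv (g.right * h) g.left
    rw [SetLike.mem_coe, hg, hχ']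
    exact W.smul_mem _ (Submodule.subset_span ⟨_, rfl⟩)
  refine (hirr.2 W hinv).resolve_left fun hbot => hv0 ?_
  rwa [hbot, Submodule.mem_bot] at hvW

variable [FiniteDimensional ℂ V]

lemma exists_mem_charSpace_charStabilizer_le_lineStabilizer {χ : N →* ℂˣ} [IsCyclic (charStabilizer φ χ)] (hχ : charSpace (ρ.comp inl) χ ≠ ⊥) :
    ∃ v ∈ charSpace (ρ.comp inl) χ, v ≠ 0 ∧
      charStabilizer φ χ ≤ Representation.lineStabilizer (ρ.comp inr) v := by
  obtain ⟨s, hs⟩ := (Subgroup.isCyclic_iff_exists_zpowers_eq_top _).1 ‹_›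
  have hsS : s⁻¹ ∈ charStabilizer φ χ := inv_mem (hs ▸ Subgroup.mem_zpowers s)
  have hmaps : ∀ w ∈ charSpace (ρ.comp inl) χ, ρ (inr s) w ∈ charSpace (ρ.comp inl) χ :=
    fun w hw => comp_eq_of_mem_charStabilizer hsS ▸ apply_inr_mem_charSpace ρ hw s
  have : Nontrivial (charSpace (ρ.comp inl) χ) := Submodule.nontrivial_iff_ne_bot.2 hχ
  obtain ⟨μ, hμ⟩ := Module.End.exists_eigenvalue ((ρ (inr s)).restrict hmaps)
  obtain ⟨⟨v, hv⟩, hvμ⟩ := hμ.exists_hasEigenvector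
  have hv0 : v ≠ 0 := fun h => hvμ.2 (Subtype.ext h)
  have hsv : ρ (inr s) v = μ • v := congrArg Subtype.val hvμ.apply_eq_smul
  have hμ0 : μ ≠ 0 := fun h => hv0 <|
    (ρ.apply_bijective _).injective (by rw [hsv, map_zero, h, zero_smul])
  exact ⟨v, hv, hv0, hs ▸ Subgroup.zpowers_le.2 ⟨Units.mk0 μ hμ0, hsv⟩⟩

theorem finrank_charSpace_eq_one [Fintype N] (hirr : IsIrrep ρ) {χ : N →* ℂˣ}
    [IsCyclic (charStabilizer φ χ)] (hχ : charSpace (ρ.comp inl) χ ≠ ⊥) :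
    Module.finrank ℂ (charSpace (ρ.comp inl) χ) = 1 := by
  obtain ⟨v, hv, hv0, hstab⟩ := exists_mem_charSpace_charStabilizer_le_lineStabilizer ρ hχ
  have hle : charSpace (ρ.comp inl) χ ≤ ℂ ∙ v := by
    refine (charSpace_le_span_inter _ (span_range_apply_inr_eq_top ρ hirr hv hv0)
      (by rintro _ ⟨h, rfl⟩; exact ⟨_, apply_inr_mem_charSpace ρ hv h⟩) χ).trans ?_
    rw [Submodule.span_le]
    rintro _ ⟨⟨h, rfl⟩, hχh⟩
    by_cases h0 : ρ (inr h) v = 0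
    · simp [h0]
    obtain ⟨c, hc⟩ := hstab (mem_charStabilizer_of_apply_inr_mem ρ hv hχh h0)
    exact Submodule.mem_span_singleton.2 ⟨c, hc.symm⟩
  rw [le_antisymm hle ((Submodule.span_singleton_le_iff_mem _ _).2 hv), finrank_span_singleton hv0]

end SemidirectProduct

/-- Each character eigenspace occurring in the restriction to `A` of a finite-dimensional
complex irreducible representation of `ℤ ⋉ A` is one-dimensional. -/
theorem stmt1 {A V : Type} [CommGroup A] [Fintype A] [AddCommGroup V] [Module ℂ V]
    [FiniteDimensional ℂ V] (σ : MulAut A)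
    (ρ : Representation ℂ (A ⋊[zpowersHom (MulAut A) σ] Multiplicative ℤ) V)
    (hirr : IsIrrep ρ) (χ : A →* ℂˣ) (hχ : charSpace (ρ.comp inl) χ ≠ ⊥) :
    Module.finrank ℂ (charSpace (ρ.comp inl) χ) = 1 :=
  finrank_charSpace_eq_one ρ hirr hχ
end

section
/- Let G = ℤ ⋉ A with A finite abelian, acted on by σ, and let V be a finite-dimensional irreducible complex G-representation. Then the number of characters χ of A with V_χ ≠ 0 equals dim V. -/
open SemidirectProduct

/-- Sum of a nontrivial character over a finite group vanishes. -/
lemma sum_char_eq_zero {A : Type*} [CommGroup A] [Fintype A] (ψ : A →* ℂˣ) (h : ψ ≠ 1) :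
    ∑ a : A, (ψ a : ℂ) = 0 := by
  obtain ⟨b, hb⟩ : ∃ b, ψ b ≠ 1 := by
    by_contra hc
    push_neg at hc
    exact h (MonoidHom.ext fun a => hc a)
  have key : (ψ b : ℂ) * ∑ a : A, (ψ a : ℂ) = ∑ a : A, (ψ a : ℂ) := by
    rw [Finset.mul_sum]
    refine Fintype.sum_equiv (Equiv.mulLeft b) _ _ fun a => ?_
    simp [mul_comm]
  have : ((ψ b : ℂ) - 1) * ∑ a : A, (ψ a : ℂ) = 0 := by ring_nf; linear_combination key
  rcases mul_eq_zero.mp this with h1 | h2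
  · rw [sub_eq_zero] at h1
    exact absurd (Units.ext (by simpa using h1)) hb
  · exact h2

lemma mem_charSpace_iff {A V : Type*} [CommGroup A] [AddCommGroup V] [Module ℂ V]
    {ρ : Representation ℂ A V} {χ : A →* ℂˣ} {v : V} :
    v ∈ charSpace ρ χ ↔ ∀ a, ρ a v = (χ a : ℂ) • v := Iff.rfl

/-- Vectors in distinct character spaces summing to zero are all zero. -/
lemma charSpace_indep {A V : Type*} [CommGroup A] [Fintype A] [AddCommGroup V] [Module ℂ V]
    (ρA : Representation ℂ A V) (s : Finset (A →* ℂˣ)) (u : (A →* ℂˣ) → V)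
    (hu : ∀ χ ∈ s, u χ ∈ charSpace ρA χ) (hsum : ∑ χ ∈ s, u χ = 0) :
    ∀ χ ∈ s, u χ = 0 := by
  intro χ₁ hχ₁
  have key : ∑ χ ∈ s, (∑ a : A, ((χ * χ₁⁻¹) a : ℂ)) • u χ = 0 := by
    have h0 : ∑ a : A, (((χ₁ a)⁻¹ : ℂˣ) : ℂ) • ρA a (∑ χ ∈ s, u χ) = 0 := by
      simp [hsum]
    calc ∑ χ ∈ s, (∑ a : A, ((χ * χ₁⁻¹) a : ℂ)) • u χ
        = ∑ χ ∈ s, ∑ a : A, (((χ * χ₁⁻¹) a : ℂ)) • u χ := by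
          simp [Finset.sum_smul]
      _ = ∑ a : A, ∑ χ ∈ s, (((χ * χ₁⁻¹) a : ℂ)) • u χ := Finset.sum_comm
      _ = ∑ a : A, (((χ₁ a)⁻¹ : ℂˣ) : ℂ) • ρA a (∑ χ ∈ s, u χ) := by
          refine Finset.sum_congr rfl fun a _ => ?_
          rw [map_sum, Finset.smul_sum]
          refine Finset.sum_congr rfl fun χ hχ => ?_
          rw [hu χ hχ a, smul_smul]
          congr 1
          push_cast [MonoidHom.mul_apply, MonoidHom.inv_apply]
          ring
      _ = 0 := h0
  rw [Finset.sum_eq_single_of_mem χ₁ hχ₁ (fun χ _ hne => by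
    rw [sum_char_eq_zero (χ * χ₁⁻¹) (fun hc => hne (mul_inv_eq_one.mp hc)), zero_smul])] at key
  have hcard : (∑ a : A, (((χ₁ * χ₁⁻¹) a : ℂˣ) : ℂ)) = (Fintype.card A : ℂ) := by
    simp
  rw [hcard] at key
  have : (Fintype.card A : ℂ) ≠ 0 := by
    exact_mod_cast Fintype.card_ne_zero
  exact (smul_eq_zero.mp key).resolve_left this

/-- Any representation of an abelian group on a nonzero f.d. complex space has a
joint eigenvector. -/
lemma exists_charSpace_ne_bot {A V : Type*} [CommGroup A] [AddCommGroup V] [Module ℂ V]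
    [FiniteDimensional ℂ V] [Nontrivial V] (ρA : Representation ℂ A V) :
    ∃ χ : A →* ℂˣ, charSpace ρA χ ≠ ⊥ := by
  classical
  set 𝒮 : Set (Submodule ℂ V) := {W | W ≠ ⊥ ∧ ∀ a, ∀ v ∈ W, ρA a v ∈ W} with h𝒮
  have htop : (⊤ : Submodule ℂ V) ∈ 𝒮 := ⟨by simp [bot_lt_top.ne'], fun a v _ => trivial⟩
  obtain ⟨W, hW, hWmin⟩ := (wellFounded_lt (α := Submodule ℂ V)).has_min 𝒮 ⟨⊤, htop⟩
  obtain ⟨hWne, hWinv⟩ := hW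
  haveI : Nontrivial W := Submodule.nontrivial_iff_ne_bot.mpr hWne
  have hscal : ∀ a : A, ∃ μ : ℂ, ∀ v ∈ W, ρA a v = μ • v := by
    intro a
    obtain ⟨μ, hμ⟩ := Module.End.exists_eigenvalue ((ρA a).restrict (hWinv a))
    obtain ⟨ev, hev⟩ := hμ.exists_hasEigenvector
    have hweq : ((ρA a).restrict (hWinv a)) ev = μ • ev := hev.apply_eq_smul
    obtain ⟨w, hwW⟩ := ev
    have hwne : (⟨w, hwW⟩ : W) ≠ 0 := hev.right
    refine ⟨μ, ?_⟩
    set E : Submodule ℂ V := W ⊓ Module.End.eigenspace (ρA a) μ with hE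
    have hEW : E ≤ W := inf_le_left
    have hEne : E ≠ ⊥ := by
      intro hc
      apply hwne
      have hwE : w ∈ E := by
        refine ⟨hwW, ?_⟩
        simp only [SetLike.mem_coe, Module.End.mem_eigenspace_iff]
        have := congrArg (Submodule.subtype W) hweq
        simpa using this
      rw [hc] at hwE
      simp only [Submodule.mem_bot] at hwE
      exact Subtype.ext hwE
    have hEinv : ∀ b, ∀ v ∈ E, ρA b v ∈ E := by
      rintro b v ⟨hvW, hve⟩
      refine ⟨hWinv b v hvW, ?_⟩
      simp only [SetLike.mem_coe, Module.End.mem_eigenspace_iff] at hve ⊢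
      have : ρA a (ρA b v) = ρA b (ρA a v) := by
        rw [← Module.End.mul_apply, ← Module.End.mul_apply, ← map_mul, ← map_mul, mul_comm]
      rw [this, hve, map_smul]
    have hEeq : E = W := by
      by_contra hne
      exact hWmin E ⟨hEne, hEinv⟩ (lt_of_le_of_ne hEW hne)
    intro v hv
    have : v ∈ E := hEeq ▸ hv
    exact Module.End.mem_eigenspace_iff.mp this.2
  choose μ hμ using hscal
  obtain ⟨⟨w₀, hw₀W⟩, hw₀ne⟩ := exists_ne (0 : W)
  have hw₀ : w₀ ≠ 0 := fun hc => hw₀ne (Subtype.ext hc)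
  have hsmul : ∀ c d : ℂ, c • w₀ = d • w₀ → c = d := by
    intro c d h
    by_contra hcd
    have : (c - d) • w₀ = 0 := by rw [sub_smul, h, sub_self]
    exact hw₀ ((smul_eq_zero.mp this).resolve_left (sub_ne_zero.mpr hcd))
  have hmul : ∀ a b : A, μ (a * b) = μ a * μ b := by
    intro a b
    apply hsmul
    rw [← hμ (a * b) w₀ hw₀W, map_mul, Module.End.mul_apply, hμ b w₀ hw₀W, map_smul,
      hμ a w₀ hw₀W, smul_smul, mul_comm (μ a)]
  have hone : μ 1 = 1 := by
    apply hsmul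
    rw [← hμ 1 w₀ hw₀W, map_one, Module.End.one_apply, one_smul]
  set χ : A →* ℂˣ :=
    { toFun := fun a => Units.mk (μ a) (μ a⁻¹)
        (by rw [← hmul, mul_inv_cancel, hone])
        (by rw [← hmul, inv_mul_cancel, hone]),
      map_one' := Units.ext (by simp [hone]),
      map_mul' := fun a b => Units.ext (by simp [hmul]) } with hχ
  refine ⟨χ, ?_⟩
  intro hc
  have : w₀ ∈ charSpace ρA χ := fun a => hμ a w₀ hw₀W
  rw [hc] at this
  exact hw₀ (Submodule.mem_bot ℂ |>.mp this)

/-- For a finite-dimensional complex irreducible representation `V` of `G = ℤ ⋉ A` with `A`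
finite abelian, the number of characters `χ` of `A` with `V_χ ≠ 0` equals `dim V`. -/
theorem stmt7 {A V : Type} [CommGroup A] [Fintype A] [AddCommGroup V] [Module ℂ V]
    [FiniteDimensional ℂ V] (σ : MulAut A)
    (ρ : Representation ℂ (A ⋊[zpowersHom (MulAut A) σ] Multiplicative ℤ) V)
    (hirr : IsIrrep ρ) :
    Nat.card {χ : A →* ℂˣ | charSpace (ρ.comp inl) χ ≠ ⊥} = Module.finrank ℂ V := by
  classical
  obtain ⟨hnt, hsimple⟩ := hirr
  haveI : Nontrivial V := hnt
  set ρA : Representation ℂ A V := ρ.comp inl with hρA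
  set S : Set (A →* ℂˣ) := {χ | charSpace ρA χ ≠ ⊥} with hS
  -- injectivity of each ρ g
  have hinj : ∀ g, Function.Injective (ρ g) := by
    intro g x y h
    have h3 : (ρ g⁻¹ * ρ g) x = (ρ g⁻¹ * ρ g) y := congrArg (ρ g⁻¹) h
    rwa [← map_mul, inv_mul_cancel, map_one, Module.End.one_apply, Module.End.one_apply] at h3
  -- choice of nonzero vectors and linear independence: upper bound material
  have hvS : ∀ χ : S, ∃ w : V, w ∈ charSpace ρA χ.1 ∧ w ≠ 0 := by
    intro χ
    obtain ⟨w, hw, hwne⟩ := (Submodule.ne_bot_iff _).mp χ.2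
    exact ⟨w, hw, hwne⟩
  choose vS hvmem hvne using hvS
  have hli : LinearIndependent ℂ vS := by
    rw [linearIndependent_iff']
    intro s g hsum i hi
    set u : (A →* ℂˣ) → V := fun χ =>
      if h : χ ∈ S then (if (⟨χ, h⟩ : S) ∈ s then g ⟨χ, h⟩ • vS ⟨χ, h⟩ else 0) else 0 with hu
    have husum : ∑ χ ∈ s.image Subtype.val, u χ = 0 := by
      rw [Finset.sum_image (by intro x _ y _ h; exact Subtype.ext h), ← hsum]
      refine Finset.sum_congr rfl fun j hj => ?_
      simp [hu, j.2, hj, Subtype.coe_eta]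
    have humem : ∀ χ ∈ s.image Subtype.val, u χ ∈ charSpace ρA χ := by
      intro χ _
      by_cases h : χ ∈ S
      · by_cases h2 : (⟨χ, h⟩ : S) ∈ s
        · have : u χ = g ⟨χ, h⟩ • vS ⟨χ, h⟩ := by
            simp only [hu]; rw [dif_pos h, if_pos h2]
          rw [this]; exact Submodule.smul_mem _ _ (hvmem ⟨χ, h⟩)
        · have : u χ = 0 := by simp only [hu]; rw [dif_pos h, if_neg h2]
          rw [this]; exact Submodule.zero_mem _
      · have : u χ = 0 := by simp only [hu]; rw [dif_neg h]
        rw [this]; exact Submodule.zero_mem _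
    have hz := charSpace_indep ρA _ u humem husum i.1 (Finset.mem_image_of_mem _ hi)
    have hz' : g i • vS i = 0 := by
      have : u i.1 = g i • vS i := by
        simp only [hu]; rw [dif_pos i.2, Subtype.coe_eta, if_pos hi]
      rwa [this] at hz
    have hz := hz'
    exact ((smul_eq_zero.mp hz).resolve_right (hvne i))
  haveI : Finite S := hli.finite
  haveI : Fintype S := Fintype.ofFinite _
  have hcard_le : Nat.card S ≤ Module.finrank ℂ V := by
    rw [Nat.card_eq_fintype_card]
    exact hli.fintype_card_le_finrank
  -- a first joint eigenvector
  obtain ⟨χ₀, hχ₀⟩ := exists_charSpace_ne_bot ρA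
  -- generator of the ℤ-part
  set t : A ⋊[zpowersHom (MulAut A) σ] Multiplicative ℤ := inr (Multiplicative.ofAdd (1:ℤ))
    with ht
  set T : V →ₗ[ℂ] V := ρ t with hT
  have hsemi : ∀ a : A, t * inl a = inl (σ a) * t := by
    intro a
    have h1 := inl_aut (φ := zpowersHom (MulAut A) σ) (Multiplicative.ofAdd (1:ℤ)) a
    rw [show (zpowersHom (MulAut A) σ) (Multiplicative.ofAdd (1:ℤ)) = σ by simp] at h1
    rw [ht, h1, mul_assoc, ← map_mul, inv_mul_cancel]
    simp
  have hcomm' : ∀ (a : A) (w : V), ρA a (T w) = T (ρA (σ⁻¹ a) w) := by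
    intro a w
    have h2 := congrArg ρ (hsemi (σ⁻¹ a))
    rw [map_mul, map_mul, MulAut.apply_inv_self] at h2
    have h3 : (ρ (inl a) * ρ t) w = (ρ t * ρ (inl (σ⁻¹ a))) w := by rw [h2]
    exact h3
  -- applying T moves between character spaces
  have hstep : ∀ (χ : A →* ℂˣ) (w : V), w ∈ charSpace ρA χ →
      T w ∈ charSpace ρA (χ.comp (σ⁻¹ : MulAut A).toMonoidHom) := by
    intro χ w hw a
    rw [hcomm' a w, hw (σ⁻¹ a), map_smul]
    rfl
  -- the orbit of χ₀
  set D : ℕ → (A →* ℂˣ) := fun j => χ₀.comp ((σ ^ j)⁻¹ : MulAut A).toMonoidHom with hD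
  have hD0 : D 0 = χ₀ := by ext a; simp [hD]
  have hDsucc : ∀ j, D (j+1) = (D j).comp (σ⁻¹ : MulAut A).toMonoidHom := by
    intro j; ext a
    simp only [hD, MonoidHom.comp_apply, MulEquiv.coe_toMonoidHom]
    rw [pow_succ', mul_inv_rev, MulAut.mul_apply]
  have hpow : ∀ (j : ℕ) (w : V), w ∈ charSpace ρA χ₀ → (T ^ j) w ∈ charSpace ρA (D j) := by
    intro j
    induction j with
    | zero => intro w hw; simpa [hD0] using hw
    | succ n ih =>
      intro w hw
      rw [pow_succ', hDsucc]
      exact hstep _ _ (ih w hw)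
  -- the period m
  have hper : ∃ k, 0 < k ∧ D k = χ₀ := by
    haveI : Finite (MulAut A) := Finite.of_injective _ DFunLike.coe_injective
    refine ⟨orderOf σ, orderOf_pos σ, ?_⟩
    ext a
    simp [hD, pow_orderOf_eq_one]
  set m := Nat.find hper with hm
  obtain ⟨hmpos, hDm⟩ : 0 < m ∧ D m = χ₀ := Nat.find_spec hper
  have hmmin : ∀ k, 0 < k → k < m → D k ≠ χ₀ := fun k h1 h2 hc =>
    Nat.find_min hper h2 ⟨h1, hc⟩
  -- eigenvector of T^m on charSpace χ₀
  set W₀ := charSpace ρA χ₀ with hW₀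
  haveI : Nontrivial W₀ := Submodule.nontrivial_iff_ne_bot.mpr hχ₀
  have hTm : ∀ w ∈ W₀, (T ^ m) w ∈ W₀ := by
    intro w hw
    have := hpow m w hw
    rwa [hDm] at this
  obtain ⟨μ, hμ⟩ := Module.End.exists_eigenvalue ((T ^ m).restrict hTm)
  obtain ⟨ev, hev⟩ := hμ.exists_hasEigenvector
  have hveq : (T ^ m) (ev : V) = μ • (ev : V) := by
    have := congrArg (Submodule.subtype W₀) hev.apply_eq_smul
    simpa using this
  set v : V := (ev : V) with hv
  have hvW₀ : v ∈ W₀ := ev.2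
  have hvne : v ≠ 0 := fun hc => hev.right (Subtype.ext hc)
  have hTinj : Function.Injective T := hinj t
  have hTpinj : ∀ j : ℕ, Function.Injective (⇑(T ^ j)) := by
    intro j
    induction j with
    | zero => rw [pow_zero]; exact Function.injective_id
    | succ n ih =>
      intro x y h
      rw [pow_succ, Module.End.mul_apply, Module.End.mul_apply] at h
      exact hTinj (ih h)
  -- the cyclic-orbit subspace
  set W : Submodule ℂ V := Submodule.span ℂ (Set.range fun i : Fin m => (T ^ (i:ℕ)) v)
    with hWdef
  have hgen : ∀ i : Fin m, (T ^ (i:ℕ)) v ∈ W := fun i => Submodule.subset_span ⟨i, rfl⟩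
  have hvW : v ∈ W := by simpa using hgen ⟨0, hmpos⟩
  have hmaple : Submodule.map T W ≤ W := by
    rw [hWdef, Submodule.map_span, Submodule.span_le]
    rintro _ ⟨_, ⟨i, rfl⟩, rfl⟩
    simp only [SetLike.mem_coe]
    by_cases hi : (i:ℕ) + 1 < m
    · have he : T ((T ^ (i:ℕ)) v) = (T ^ ((i:ℕ)+1)) v := by rw [pow_succ']; rfl
      rw [he]
      exact hgen ⟨(i:ℕ)+1, hi⟩
    · have him : (i:ℕ)+1 = m := by have := i.2; omega
      have he : T ((T ^ (i:ℕ)) v) = (T ^ ((i:ℕ)+1)) v := by rw [pow_succ']; rfl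
      rw [he, him, hveq]
      exact Submodule.smul_mem _ _ hvW
  have hTW : ∀ w ∈ W, T w ∈ W := fun w hw => hmaple (Submodule.mem_map_of_mem hw)
  have hmapTW : Submodule.map T W = W := by
    refine Submodule.eq_of_le_of_finrank_le hmaple ?_
    rw [(LinearEquiv.finrank_eq (Submodule.equivMapOfInjective T hTinj W) :
      Module.finrank ℂ W = _)]
  -- invariance under the ℤ-part
  have hTzW : ∀ z : ℤ, ∀ w ∈ W, ρ (inr (Multiplicative.ofAdd z)) w ∈ W := by
    intro z
    induction z using Int.induction_on with
    | zero =>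
      intro w hw
      have : (inr (Multiplicative.ofAdd (0:ℤ)) :
          A ⋊[zpowersHom (MulAut A) σ] Multiplicative ℤ) = 1 := by
        simp
      rw [this, map_one]
      simpa using hw
    | succ z ih =>
      intro w hw
      have h5 : t * inr (Multiplicative.ofAdd (z:ℤ)) =
          inr (Multiplicative.ofAdd ((z:ℤ)+1)) := by
        rw [ht, ← map_mul, ← ofAdd_add]
        ring_nf
      rw [← h5, map_mul, Module.End.mul_apply]
      exact hTW _ (ih w hw)
    | pred z ih =>
      intro w hw
      have h5 : t * inr (Multiplicative.ofAdd (-(z:ℤ) - 1)) =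
          inr (Multiplicative.ofAdd (-(z:ℤ))) := by
        rw [ht, ← map_mul, ← ofAdd_add]
        ring_nf
      have h6 : T (ρ (inr (Multiplicative.ofAdd (-(z:ℤ) - 1))) w) ∈ Submodule.map T W := by
        rw [hmapTW, ← Module.End.mul_apply, hT, ← map_mul, h5]
        exact ih w hw
      obtain ⟨w', hw'W, hw'⟩ := h6
      have := hTinj hw'
      rw [← this]
      exact hw'W
  -- invariance under A
  have hAW : ∀ a : A, ∀ w ∈ W, ρ (inl a) w ∈ W := by
    intro a
    have hle : Submodule.map (ρ (inl a)) W ≤ W := by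
      rw [hWdef, Submodule.map_span, Submodule.span_le]
      rintro _ ⟨_, ⟨i, rfl⟩, rfl⟩
      simp only [SetLike.mem_coe]
      have h7 := hpow i v hvW₀ a
      have h7' : ρ (inl a) ((T ^ (i:ℕ)) v) = ((D i a : ℂˣ) : ℂ) • (T ^ (i:ℕ)) v := h7
      rw [h7']
      exact Submodule.smul_mem _ _ (hgen i)
    exact fun w hw => hle (Submodule.mem_map_of_mem hw)
  -- full invariance and irreducibility
  have hWinvG : ∀ g, ∀ w ∈ W, ρ g w ∈ W := by
    intro g w hw
    rw [← inl_left_mul_inr_right g, map_mul, Module.End.mul_apply]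
    refine hAW g.left _ ?_
    have := hTzW (Multiplicative.toAdd g.right) w hw
    simpa using this
  have hWtop : W = ⊤ := by
    rcases hsimple W hWinvG with h | h
    · exact absurd (h ▸ hvW) (by simpa using hvne)
    · exact h
  -- dim V ≤ m
  have hfr : Module.finrank ℂ V ≤ m := by
    have := finrank_le_of_span_eq_top (hWdef ▸ hWtop)
    simpa using this
  -- m ≤ Nat.card S
  have hDS : ∀ i : Fin m, D i ∈ S := by
    intro i
    have h7 : (T ^ (i:ℕ)) v ∈ charSpace ρA (D i) := hpow i v hvW₀
    have h8 : (T ^ (i:ℕ)) v ≠ 0 := fun hc => hvne (hTpinj i (by simpa using hc))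
    intro hc
    rw [hc] at h7
    exact h8 (by simpa using h7)
  have hDinj : ∀ i j : ℕ, i ≤ j → j < m → D i = D j → i = j := by
    intro i j hij hjm hD'
    by_contra hne
    have hlt : i < j := lt_of_le_of_ne hij hne
    have hself : ∀ b : A, (σ ^ i)⁻¹ ((σ ^ i) b) = b := by
      intro b
      rw [← MulAut.mul_apply, inv_mul_cancel, MulAut.one_apply]
    have hcomp : ∀ b : A, (σ ^ j)⁻¹ ((σ ^ i) b) = (σ ^ (j - i))⁻¹ b := by
      intro b
      have hj' : σ ^ j = σ ^ i * σ ^ (j - i) := by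
        rw [← pow_add]
        congr 1
        omega
      rw [hj', mul_inv_rev, MulAut.mul_apply, hself b]
    have key : D (j - i) = χ₀ := by
      ext b
      have h9 := DFunLike.congr_fun hD' ((σ ^ i) b)
      simp only [hD, MonoidHom.comp_apply, MulEquiv.coe_toMonoidHom] at h9 ⊢
      rw [hcomp b, hself b] at h9
      exact_mod_cast h9.symm
    exact hmmin (j - i) (by omega) (by omega) key
  have hminj : Function.Injective (fun i : Fin m => (⟨D i, hDS i⟩ : S)) := by
    intro i j hij
    have : D i = D j := congrArg Subtype.val hij
    rcases le_total (i:ℕ) (j:ℕ) with h | h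
    · exact Fin.ext (hDinj (i:ℕ) (j:ℕ) h j.2 this)
    · exact (Fin.ext (hDinj (j:ℕ) (i:ℕ) h i.2 this.symm)).symm
  have hm_le : m ≤ Nat.card S := by
    have := Nat.card_le_card_of_injective _ hminj
    simpa using this
  omega
end
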